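/- arXiv:2409.13304 — 4 statements merged into one kernel-verified Lean document; each statement's English description precedes it below -/
import Mathlib

section
/- Let S₁ and S₂ be finite point sets with disjoint convex hulls, let θ₁ ≤ θ₂ be the orientations of their two outer common tangent lines, and suppose S₁ dominates S₂ (i.e., σ_{[θ₁,θ₂]}(S₂) ⊆ σ_{[θ₁,θ₂]}(S₁)). Then width_{[θ₁,θ₂]}(S₁ ∪ S₂) = width_{[θ₁,θ₂]}(S₁). -/
open Set

noncomputable section

/-- Signed coordinate of a point in the direction of the unit normal of orientation `θ`. -/
def oproj (θ : ℝ) (p : ℝ × ℝ) : ℝ := -Real.sin θ * p.1 + Real.cos θ * p.2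

/-- Tangential coordinate of a point for orientation `θ`. -/
def otang (θ : ℝ) (p : ℝ × ℝ) : ℝ := Real.cos θ * p.1 + Real.sin θ * p.2

/-- Width of the minimum-width strip in orientation `θ` enclosing `S`. -/
def widthAt (θ : ℝ) (S : Set (ℝ × ℝ)) : ℝ := sSup (oproj θ '' S) - sInf (oproj θ '' S)

/-- The minimum-width strip in orientation `θ` enclosing `S`. -/
def stripAt (θ : ℝ) (S : Set (ℝ × ℝ)) : Set (ℝ × ℝ) :=
  {q | sInf (oproj θ '' S) ≤ oproj θ q ∧ oproj θ q ≤ sSup (oproj θ '' S)}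

/-- Width of a planar set: minimum over all orientations of the enclosing strip width. -/
def widthSet (S : Set (ℝ × ℝ)) : ℝ := sInf ((fun θ => widthAt θ S) '' Set.Ico 0 Real.pi)

/-- Orientation-constrained width over the interval `[θ₁, θ₂]`. -/
def widthIn (θ₁ θ₂ : ℝ) (S : Set (ℝ × ℝ)) : ℝ :=
  sInf ((fun θ => widthAt θ S) '' Set.Icc θ₁ θ₂)

/-- Intersection of the minimal strips over all orientations in `[θ₁, θ₂]`. -/
def stripIn (θ₁ θ₂ : ℝ) (S : Set (ℝ × ℝ)) : Set (ℝ × ℝ) :=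
  ⋂ θ ∈ Set.Icc θ₁ θ₂, stripAt θ S

/-- Euclidean distance in the plane. -/
def dist2 (p q : ℝ × ℝ) : ℝ := Real.sqrt ((p.1 - q.1) ^ 2 + (p.2 - q.2) ^ 2)

/-- Euclidean distance between two planar sets. -/
def setDist2 (A B : Set (ℝ × ℝ)) : ℝ := sInf {d | ∃ a ∈ A, ∃ b ∈ B, d = dist2 a b}

/-- Membership in the strip of orientation `θ` with normal coordinates in `[a,b]`. -/
def inStrip (θ a b : ℝ) (q : ℝ × ℝ) : Prop := a ≤ oproj θ q ∧ oproj θ q ≤ b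

/-- An outer common tangent of `S₁` and `S₂` in orientation `θ`: a line of orientation `θ`
touching both sets and having both sets on one side. -/
def IsOuterTangent (θ : ℝ) (S₁ S₂ : Set (ℝ × ℝ)) : Prop :=
  ∃ c : ℝ, ((∀ p ∈ S₁ ∪ S₂, oproj θ p ≤ c) ∨ (∀ p ∈ S₁ ∪ S₂, c ≤ oproj θ p)) ∧
    (∃ p ∈ S₁, oproj θ p = c) ∧ (∃ p ∈ S₂, oproj θ p = c)

/-- if `S₁` dominates `S₂` then
`width_{[θ₁,θ₂]}(S₁ ∪ S₂) = width_{[θ₁,θ₂]}(S₁)`. -/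
theorem stmt3 (S₁ S₂ : Set (ℝ × ℝ)) (h1 : S₁.Finite) (h2 : S₂.Finite)
    (hn1 : S₁.Nonempty) (hn2 : S₂.Nonempty)
    (hdisj : Disjoint (convexHull ℝ S₁) (convexHull ℝ S₂))
    (θ₁ θ₂ : ℝ) (h0 : 0 ≤ θ₁) (h12 : θ₁ ≤ θ₂) (hpi : θ₂ < Real.pi)
    (ht1 : IsOuterTangent θ₁ S₁ S₂) (ht2 : IsOuterTangent θ₂ S₁ S₂)
    (hdom : stripIn θ₁ θ₂ S₂ ⊆ stripIn θ₁ θ₂ S₁) :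
    widthIn θ₁ θ₂ (S₁ ∪ S₂) = widthIn θ₁ θ₂ S₁ := by
  have key : ∀ θ ∈ Set.Icc θ₁ θ₂, widthAt θ (S₁ ∪ S₂) = widthAt θ S₁ := by
    intro θ hθ
    have hself : S₂ ⊆ stripIn θ₁ θ₂ S₂ := by
      intro p hp
      simp only [stripIn, Set.mem_iInter]
      intro θ' _
      exact ⟨csInf_le ((h2.image _).bddBelow) ⟨p, hp, rfl⟩,
        le_csSup ((h2.image _).bddAbove) ⟨p, hp, rfl⟩⟩
    have hsub : ∀ p ∈ S₂,
        sInf (oproj θ '' S₁) ≤ oproj θ p ∧ oproj θ p ≤ sSup (oproj θ '' S₁) := by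
      intro p hp
      have := hdom (hself hp)
      simp only [stripIn, Set.mem_iInter, stripAt, Set.mem_setOf_eq] at this
      exact this θ hθ
    have himg : oproj θ '' (S₁ ∪ S₂) = oproj θ '' S₁ ∪ oproj θ '' S₂ :=
      Set.image_union _ _ _
    have hA : (oproj θ '' S₁).Nonempty := hn1.image _
    have hB : (oproj θ '' S₂).Nonempty := hn2.image _
    have hsup : sSup (oproj θ '' (S₁ ∪ S₂)) = sSup (oproj θ '' S₁) := by
      rw [himg, csSup_union (h1.image _).bddAbove hA (h2.image _).bddAbove hB]
      exact sup_eq_left.mpr (csSup_le hB (by rintro x ⟨p, hp, rfl⟩; exact (hsub p hp).2))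
    have hinf : sInf (oproj θ '' (S₁ ∪ S₂)) = sInf (oproj θ '' S₁) := by
      rw [himg, csInf_union (h1.image _).bddBelow hA (h2.image _).bddBelow hB]
      exact inf_eq_left.mpr (le_csInf hB (by rintro x ⟨p, hp, rfl⟩; exact (hsub p hp).1))
    unfold widthAt
    rw [hsup, hinf]
  unfold widthIn
  congr 1
  ext x
  simp only [Set.mem_image]
  constructor
  · rintro ⟨θ, hθ, rfl⟩; exact ⟨θ, hθ, (key θ hθ).symm⟩
  · rintro ⟨θ, hθ, rfl⟩; exact ⟨θ, hθ, key θ hθ⟩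
end
end

section
/- Let σ be a minimum-width strip enclosing a finite point set P (with |P| ≥ 3, not all collinear). Then the boundary of σ contains three points p, q, r of P such that p and q lie on one bounding line, r lies on the other bounding line, and the orthogonal projection of r onto the line through p and q lies on the segment pq. -/
open Set

noncomputable section

lemma oproj_add' (θ δ : ℝ) (z : ℝ × ℝ) :
    oproj (θ + δ) z = Real.cos δ * oproj θ z - Real.sin δ * otang θ z := by
  simp only [oproj, otang, Real.sin_add, Real.cos_add]; ring

lemma sSup_neg_image' (S : Set ℝ) (hfin : S.Finite) (hne : S.Nonempty) :
    sSup ((fun x => -x) '' S) = - sInf S := by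
  apply le_antisymm
  · apply csSup_le (hne.image _)
    rintro y ⟨x, hx, rfl⟩
    simp only [neg_le_neg_iff]
    exact csInf_le hfin.bddBelow hx
  · exact le_csSup (hfin.image _).bddAbove ⟨sInf S, hne.csInf_mem hfin, rfl⟩

lemma sInf_neg_image' (S : Set ℝ) (hfin : S.Finite) (hne : S.Nonempty) :
    sInf ((fun x => -x) '' S) = - sSup S := by
  apply le_antisymm
  · exact csInf_le (hfin.image _).bddBelow ⟨sSup S, hne.csSup_mem hfin, rfl⟩
  · apply le_csInf (hne.image _)
    rintro y ⟨x, hx, rfl⟩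
    simp only [neg_le_neg_iff]
    exact le_csSup hfin.bddAbove hx

lemma widthAt_periodic' (P : Set (ℝ × ℝ)) (hP : P.Finite) (hne : P.Nonempty) :
    Function.Periodic (fun φ => widthAt φ P) Real.pi := by
  intro φ
  have himg : oproj (φ + Real.pi) '' P = (fun x => -x) '' (oproj φ '' P) := by
    rw [Set.image_image]
    apply Set.image_congr
    intro z _
    simp [oproj, Real.sin_add, Real.cos_add]; ring
  simp only [widthAt, himg,
    sSup_neg_image' _ (hP.image _) (hne.image _),
    sInf_neg_image' _ (hP.image _) (hne.image _)]
  ring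

lemma widthSet_le' (P : Set (ℝ × ℝ)) (hP : P.Finite) (hne : P.Nonempty) (φ : ℝ) :
    widthSet P ≤ widthAt φ P := by
  obtain ⟨y, hy, hEq⟩ := (widthAt_periodic' P hP hne).exists_mem_Ico₀ Real.pi_pos φ
  rw [widthSet, hEq]
  apply csInf_le
  · refine ⟨0, ?_⟩
    rintro w ⟨ψ, -, rfl⟩
    have : sInf (oproj ψ '' P) ≤ sSup (oproj ψ '' P) :=
      csInf_le_csSup (hne.image _) (hP.image _).bddBelow (hP.image _).bddAbove
    simp only [widthAt]; linarith
  · exact ⟨y, hy, rfl⟩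

set_option maxHeartbeats 1000000 in
lemma key' (P : Set (ℝ × ℝ)) (hP : P.Finite) (hne : P.Nonempty) (θ : ℝ)
    (hmin : ∀ φ, widthAt θ P ≤ widthAt φ P)
    (hε : 0 < widthAt θ P) (s : ℝ) (hs : s = 1 ∨ s = -1)
    (hyp : ∀ x ∈ P, ∀ y ∈ P, oproj θ x = sSup (oproj θ '' P) →
      oproj θ y = sInf (oproj θ '' P) → 0 ≤ s * (otang θ x - otang θ y)) : False := by
  set u := oproj θ with hu
  set M := sSup (u '' P) with hM
  set m := sInf (u '' P) with hm
  set ε := M - m with hεdef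
  have hεpos : 0 < ε := hε
  have hPfin : (u '' P).Finite := hP.image _
  have hPne : (u '' P).Nonempty := hne.image _
  have hleM : ∀ p ∈ P, u p ≤ M := fun p hp => le_csSup hPfin.bddAbove ⟨p, hp, rfl⟩
  have hgem : ∀ p ∈ P, m ≤ u p := fun p hp => csInf_le hPfin.bddBelow ⟨p, hp, rfl⟩
  set C := sSup ((fun z => |otang θ z|) '' P) with hC
  have hCb : ∀ z ∈ P, |otang θ z| ≤ C := fun z hz =>
    le_csSup (hP.image _).bddAbove ⟨z, hz, rfl⟩
  obtain ⟨z₀, hz₀⟩ := id hne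
  have hC0 : 0 ≤ C := le_trans (abs_nonneg _) (hCb z₀ hz₀)
  set K := 2 * C + 1 with hK
  have hKpos : 0 < K := by positivity
  set E := (fun q : (ℝ × ℝ) × (ℝ × ℝ) => u q.1 - u q.2) '' (P ×ˢ P) with hE
  have hEfin : E.Finite := ((hP.prod hP).image _)
  set D := E ∩ Set.Iio ε with hD
  have hDfin : D.Finite := hEfin.inter_of_left _
  have hDne : D.Nonempty := ⟨0, ⟨(z₀, z₀), ⟨hz₀, hz₀⟩, by simp⟩, hεpos⟩
  set d := sSup D with hd
  have hdD : d ∈ D := hDne.csSup_mem hDfin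
  have hdlt : d < ε := hdD.2
  set η := ε - max d 0 with hη
  have hηpos : 0 < η := by
    have : max d 0 < ε := max_lt hdlt hεpos
    simpa [hη] using sub_pos.2 this
  set δ := min (Real.pi / 4) (η / K) with hδ
  have hδpos : 0 < δ := lt_min (by positivity) (by positivity)
  have hδle : δ ≤ Real.pi / 4 := min_le_left _ _
  have hδlt : δ < Real.pi / 2 := lt_of_le_of_lt hδle (by linarith [Real.pi_pos])
  have hsin_pos : 0 < Real.sin δ := Real.sin_pos_of_pos_of_lt_pi hδpos
    (by linarith [Real.pi_pos])
  have hsinlt : Real.sin δ < η / K :=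
    lt_of_lt_of_le (Real.sin_lt hδpos) (min_le_right _ _)
  have hsinK : Real.sin δ * K < η := by
    rw [← lt_div_iff₀ hKpos]; exact hsinlt
  have hcos_pos : 0 < Real.cos δ := Real.cos_pos_of_mem_Ioo ⟨by linarith, hδlt⟩
  have hcos_lt : Real.cos δ < 1 := by
    have h := Real.cos_lt_cos_of_nonneg_of_le_pi le_rfl (by linarith [Real.pi_pos]) hδpos
    simpa using h
  set φ := θ + s * δ with hφ
  have hform : ∀ z : ℝ × ℝ, oproj φ z = Real.cos δ * u z - Real.sin δ * (s * otang θ z) := by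
    intro z
    rcases hs with rfl | rfl
    · rw [hφ, one_mul, oproj_add']; ring
    · rw [hφ]
      have : θ + (-1 : ℝ) * δ = θ + -δ := by ring
      rw [this, oproj_add', Real.cos_neg, Real.sin_neg]; ring
  have hfin' : (oproj φ '' P).Finite := hP.image _
  have hne' : (oproj φ '' P).Nonempty := hne.image _
  obtain ⟨x, hx, hxT⟩ : ∃ x ∈ P, oproj φ x = sSup (oproj φ '' P) := by
    obtain ⟨x, hx, h⟩ := hne'.csSup_mem hfin'
    exact ⟨x, hx, h⟩
  obtain ⟨y, hy, hyT⟩ : ∃ y ∈ P, oproj φ y = sInf (oproj φ '' P) := by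
    obtain ⟨y, hy, h⟩ := hne'.csInf_mem hfin'
    exact ⟨y, hy, h⟩
  have hwidth : widthAt φ P = oproj φ x - oproj φ y := by
    rw [widthAt, hxT, hyT]
  set Du := u x - u y with hDu
  set Dv := s * (otang θ x - otang θ y) with hDv
  have hg : oproj φ x - oproj φ y = Real.cos δ * Du - Real.sin δ * Dv := by
    rw [hform x, hform y, hDu, hDv]; ring
  have hDu_le : Du ≤ ε := by
    have := hleM x hx; have := hgem y hy; rw [hDu, hεdef]; linarith
  have habsDv : |Dv| ≤ K := by
    have h1 := hCb x hx; have h2 := hCb y hy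
    have : |otang θ x - otang θ y| ≤ 2 * C := by
      calc |otang θ x - otang θ y| ≤ |otang θ x| + |otang θ y| := abs_sub _ _
        _ ≤ 2 * C := by linarith
    have hsabs : |Dv| = |otang θ x - otang θ y| := by
      rw [hDv, abs_mul]; rcases hs with rfl | rfl <;> simp
    rw [hsabs]; linarith
  have hlt : oproj φ x - oproj φ y < ε := by
    rcases eq_or_lt_of_le hDu_le with heq | hlt'
    · have hxM : u x = M := by
        have := hleM x hx; have := hgem y hy
        rw [hDu, hεdef] at heq; linarith
      have hym : u y = m := by
        have := hleM x hx; have := hgem y hy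
        rw [hDu, hεdef] at heq; linarith
      have hDv0 : 0 ≤ Dv := hyp x hx y hy hxM hym
      rw [hg, heq]
      have hA : Real.cos δ * ε < 1 * ε := mul_lt_mul_of_pos_right hcos_lt hεpos
      have hB : 0 ≤ Real.sin δ * Dv := mul_nonneg hsin_pos.le hDv0
      linarith
    · have hDuD : Du ∈ D := ⟨⟨(x, y), ⟨hx, hy⟩, rfl⟩, hlt'⟩
      have hDud : Du ≤ d := le_csSup hDfin.bddAbove hDuD
      have h1 : Real.cos δ * Du ≤ max d 0 := by
        rcases le_or_gt 0 Du with h | h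
        · calc Real.cos δ * Du ≤ 1 * Du := mul_le_mul_of_nonneg_right hcos_lt.le h
            _ = Du := one_mul _
            _ ≤ max d 0 := le_max_of_le_left hDud
        · have : Real.cos δ * Du < 0 := mul_neg_of_pos_of_neg hcos_pos h
          exact le_trans this.le (le_max_right _ _)
      have h2 : - (Real.sin δ * Dv) ≤ Real.sin δ * K := by
        rw [← mul_neg]
        exact mul_le_mul_of_nonneg_left (le_trans (neg_le_abs _) habsDv) hsin_pos.le
      rw [hg]
      have : max d 0 + η = ε := by rw [hη]; ring
      linarith
  have hmφ := hmin φ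
  rw [hwidth] at hmφ
  have hwθ : widthAt θ P = ε := rfl
  rw [hwθ] at hmφ
  linarith

lemma collinear_of_oproj_const' (P : Set (ℝ × ℝ)) (θ : ℝ) (p₀ : ℝ × ℝ) (hp₀ : p₀ ∈ P)
    (h : ∀ p ∈ P, oproj θ p = oproj θ p₀) : Collinear ℝ P := by
  rw [collinear_iff_of_mem hp₀]
  refine ⟨(Real.cos θ, Real.sin θ), fun p hp => ⟨otang θ p - otang θ p₀, ?_⟩⟩
  have h1 := h p hp
  have h2 := Real.sin_sq_add_cos_sq θ
  simp only [oproj, otang] at *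
  apply Prod.ext <;>
    simp only [vadd_eq_add, Prod.smul_mk, Prod.fst_add, Prod.snd_add, smul_eq_mul]
  · linear_combination (-Real.sin θ) * h1 + (p₀.1 - p.1) * h2
  · linear_combination (Real.cos θ) * h1 + (p₀.2 - p.2) * h2


/-- a minimum-width strip enclosing `P` has two points of `P` on one bounding
line and one on the other, with the projection of the latter between the former two. -/
theorem stmt6 (P : Set (ℝ × ℝ)) (hP : P.Finite) (h3 : 3 ≤ P.ncard)
    (hcol : ¬ Collinear ℝ P) (θ : ℝ) (hθ : widthAt θ P = widthSet P) :
    ∃ p ∈ P, ∃ q ∈ P, ∃ r ∈ P, p ≠ q ∧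
      ((oproj θ p = sSup (oproj θ '' P) ∧ oproj θ q = sSup (oproj θ '' P) ∧
        oproj θ r = sInf (oproj θ '' P)) ∨
       (oproj θ p = sInf (oproj θ '' P) ∧ oproj θ q = sInf (oproj θ '' P) ∧
        oproj θ r = sSup (oproj θ '' P))) ∧
      min (otang θ p) (otang θ q) ≤ otang θ r ∧
      otang θ r ≤ max (otang θ p) (otang θ q) := by
  have hne : P.Nonempty := Set.nonempty_of_ncard_ne_zero (by omega)
  have hmin : ∀ φ, widthAt θ P ≤ widthAt φ P := fun φ => by
    rw [hθ]; exact widthSet_le' P hP hne φ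
  have hPfin : (oproj θ '' P).Finite := hP.image _
  have hleM : ∀ p ∈ P, oproj θ p ≤ sSup (oproj θ '' P) :=
    fun p hp => le_csSup hPfin.bddAbove ⟨p, hp, rfl⟩
  have hgem : ∀ p ∈ P, sInf (oproj θ '' P) ≤ oproj θ p :=
    fun p hp => csInf_le hPfin.bddBelow ⟨p, hp, rfl⟩
  have hε : 0 < widthAt θ P := by
    rcases lt_or_ge 0 (widthAt θ P) with h | h
    · exact h
    · exfalso
      apply hcol
      obtain ⟨p₀, hp₀⟩ := hne
      apply collinear_of_oproj_const' P θ p₀ hp₀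
      intro p hp
      have h1 := hleM p hp
      have h2 := hgem p hp
      have h3 := hleM p₀ hp₀
      have h4 := hgem p₀ hp₀
      simp only [widthAt] at h
      linarith
  have h1 : ∃ x ∈ P, ∃ y ∈ P, oproj θ x = sSup (oproj θ '' P) ∧
      oproj θ y = sInf (oproj θ '' P) ∧ otang θ x < otang θ y := by
    by_contra hcon
    push_neg at hcon
    refine key' P hP hne θ hmin hε 1 (Or.inl rfl) ?_
    intro x hx y hy hxM hym
    have := hcon x hx y hy hxM hym
    linarith
  have h2 : ∃ x ∈ P, ∃ y ∈ P, oproj θ x = sSup (oproj θ '' P) ∧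
      oproj θ y = sInf (oproj θ '' P) ∧ otang θ y < otang θ x := by
    by_contra hcon
    push_neg at hcon
    refine key' P hP hne θ hmin hε (-1) (Or.inr rfl) ?_
    intro x hx y hy hxM hym
    have := hcon x hx y hy hxM hym
    linarith
  obtain ⟨x₁, hx₁, y₁, hy₁, hx₁M, hy₁m, hlt₁⟩ := h1
  obtain ⟨x₂, hx₂, y₂, hy₂, hx₂M, hy₂m, hlt₂⟩ := h2
  rcases le_or_gt (otang θ y₁) (otang θ x₂) with hc | hc
  · refine ⟨x₁, hx₁, x₂, hx₂, y₁, hy₁, ?_, Or.inl ⟨hx₁M, hx₂M, hy₁m⟩, ?_, ?_⟩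
    · intro h; apply absurd hc; rw [← h]; linarith
    · exact le_trans (min_le_left _ _) hlt₁.le
    · exact le_trans hc (le_max_right _ _)
  · refine ⟨y₂, hy₂, y₁, hy₁, x₂, hx₂, ?_, Or.inr ⟨hy₂m, hy₁m, hx₂M⟩, ?_, ?_⟩
    · intro h; rw [h] at hlt₂; linarith
    · exact le_trans (min_le_left _ _) hlt₂.le
    · exact le_trans hc.le (le_max_right _ _)
end
end

section
/- Let (σ₁, σ₂) be a pair of strips enclosing a finite point set P minimizing the maximum of their widths, subject to their orientations differing by a fixed angle β. If each bounding line of σ₁ and σ₂ touches P and width(σ₁) > width(σ₂), then some bounding line of σ₁ contains at least two points of P (assuming no degenerate configuration); equivalently, if both bounding lines of σ₁ contain exactly one point of P each, then the pair is not optimal. -/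
open Set

noncomputable section

/-- `P` can be covered by two strips of width at most `w` whose orientations differ by `β`. -/
def TwoStripCover (β w : ℝ) (P : Set (ℝ × ℝ)) : Prop :=
  ∃ θ a₁ b₁ a₂ b₂ : ℝ, b₁ - a₁ ≤ w ∧ b₂ - a₂ ≤ w ∧
    ∀ q ∈ P, inStrip θ a₁ b₁ q ∨ inStrip (θ + β) a₂ b₂ q

lemma oproj_shift (φ ε : ℝ) (p : ℝ × ℝ) :
    oproj (φ + ε) p = Real.cos ε * oproj φ p - Real.sin ε * otang φ p := by
  simp only [oproj, otang, Real.sin_add, Real.cos_add]; ring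

lemma pair_bound (φ c : ℝ) (p q : ℝ × ℝ) (h : oproj φ p - oproj φ q < c) (ε : ℝ)
    (hε2 : |ε| ≤ 2)
    (hε : |ε| ≤ (c - (oproj φ p - oproj φ q)) /
      (|oproj φ p - oproj φ q| + |otang φ p - otang φ q| + 1)) :
    oproj (φ + ε) p - oproj (φ + ε) q < c := by
  set g0 := oproj φ p - oproj φ q with hg0
  set D := otang φ p - otang φ q with hD
  have key : oproj (φ + ε) p - oproj (φ + ε) q = Real.cos ε * g0 - Real.sin ε * D := by
    rw [oproj_shift, oproj_shift]; ring
  have h1 : 1 - Real.cos ε ≤ |ε| := by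
    have h2 := Real.one_sub_sq_div_two_le_cos (x := ε)
    have hsq : ε ^ 2 ≤ 2 * |ε| := by
      have h3 : |ε| * |ε| ≤ 2 * |ε| := mul_le_mul_of_nonneg_right hε2 (abs_nonneg ε)
      nlinarith [abs_mul_abs_self ε]
    linarith
  have h2 : |Real.sin ε| ≤ |ε| := Real.abs_sin_le_abs
  have hden : 0 < |g0| + |D| + 1 := by positivity
  have hmul : |ε| * (|g0| + |D| + 1) ≤ c - g0 := (le_div_iff₀ hden).mp hε
  have hc1 : Real.cos ε * g0 ≤ g0 + |ε| * |g0| := by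
    nlinarith [le_abs_self ((Real.cos ε - 1) * g0), abs_mul (Real.cos ε - 1) g0,
      abs_of_nonpos (sub_nonpos.mpr (Real.cos_le_one ε)), abs_nonneg g0]
  have hc2 : -(Real.sin ε * D) ≤ |ε| * |D| := by
    calc -(Real.sin ε * D) ≤ |Real.sin ε * D| := neg_le_abs _
      _ = |Real.sin ε| * |D| := abs_mul _ _
      _ ≤ |ε| * |D| := mul_le_mul_of_nonneg_right h2 (abs_nonneg _)
  rw [key]
  rcases eq_or_ne ε 0 with rfl | hε0
  · simpa using h
  · have : 0 < |ε| := abs_pos.mpr hε0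
    nlinarith

/-- in an optimal constrained two-strip whose wider strip is `σ₁`,
if every bounding line touches `P`, then some bounding line of `σ₁` contains two points
of `P` (no three points of `P` being collinear). -/
theorem stmt10 (P : Set (ℝ × ℝ)) (hP : P.Finite)
    (hgen : ∀ s ⊆ P, s.ncard = 3 → ¬ Collinear ℝ s)
    (β θ a₁ b₁ a₂ b₂ : ℝ)
    (hcover : ∀ q ∈ P, inStrip θ a₁ b₁ q ∨ inStrip (θ + β) a₂ b₂ q)
    (htouch₁ : (∃ q ∈ P, oproj θ q = a₁) ∧ (∃ q ∈ P, oproj θ q = b₁))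
    (htouch₂ : (∃ q ∈ P, oproj (θ + β) q = a₂) ∧ (∃ q ∈ P, oproj (θ + β) q = b₂))
    (hwid : b₂ - a₂ < b₁ - a₁)
    (hopt : ∀ w, TwoStripCover β w P → b₁ - a₁ ≤ w) :
    ∃ q₁ ∈ P, ∃ q₂ ∈ P, q₁ ≠ q₂ ∧
      ((oproj θ q₁ = a₁ ∧ oproj θ q₂ = a₁) ∨ (oproj θ q₁ = b₁ ∧ oproj θ q₂ = b₁)) := by
  classical
  by_contra hneg
  have uniqa : ∀ x ∈ P, ∀ y ∈ P, oproj θ x = a₁ → oproj θ y = a₁ → x = y := by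
    intro x hx y hy hxa hya
    by_contra hxy
    exact hneg ⟨x, hx, y, hy, hxy, Or.inl ⟨hxa, hya⟩⟩
  have uniqb : ∀ x ∈ P, ∀ y ∈ P, oproj θ x = b₁ → oproj θ y = b₁ → x = y := by
    intro x hx y hy hxa hya
    by_contra hxy
    exact hneg ⟨x, hx, y, hy, hxy, Or.inr ⟨hxa, hya⟩⟩
  rcases le_or_gt b₁ a₁ with hba | hba
  · -- degenerate case: strip 2 is empty, all of P on the line oproj θ = a₁
    have hb2 : b₂ < a₂ := by linarith
    obtain ⟨⟨q, hq, hqa⟩, ⟨q', hq', hqb⟩⟩ := htouch₂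
    have hqq' : q ≠ q' := by
      intro h; rw [h, hqb] at hqa; linarith
    have hq1 : oproj θ q = a₁ := by
      rcases hcover q hq with ⟨h1, h2⟩ | ⟨h1, h2⟩
      · linarith
      · rw [hqa] at h2; linarith
    have hq'1 : oproj θ q' = a₁ := by
      rcases hcover q' hq' with ⟨h1, h2⟩ | ⟨h1, h2⟩
      · linarith
      · rw [hqb] at h1; linarith
    exact hneg ⟨q, hq, q', hq', hqq', Or.inl ⟨hq1, hq'1⟩⟩
  · -- main case
    set c := b₁ - a₁ with hc
    have hcpos : 0 < c := by simp [hc]; linarith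
    obtain ⟨⟨pa, hpaP, hpa⟩, ⟨pb, hpbP, hpb⟩⟩ := htouch₁
    set Pf := hP.toFinset with hPf
    set P₁ : Finset (ℝ × ℝ) := Pf.filter (fun p => inStrip θ a₁ b₁ p) with hP₁
    set P₂ : Finset (ℝ × ℝ) := Pf \ P₁ with hP₂
    have hmemPf : ∀ p, p ∈ Pf ↔ p ∈ P := fun p => hP.mem_toFinset
    have hmem₁ : ∀ p, p ∈ P₁ ↔ p ∈ P ∧ inStrip θ a₁ b₁ p := by
      intro p; simp [hP₁, hmemPf p, Finset.mem_filter]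
    have hmem₂ : ∀ p ∈ P₂, p ∈ P ∧ inStrip (θ + β) a₂ b₂ p := by
      intro p hp
      rw [hP₂, Finset.mem_sdiff] at hp
      have hpP : p ∈ P := (hmemPf p).mp hp.1
      refine ⟨hpP, ?_⟩
      rcases hcover p hpP with h | h
      · exact absurd ((hmem₁ p).mpr ⟨hpP, h⟩) hp.2
      · exact h
    have hpa₁ : pa ∈ P₁ := (hmem₁ pa).mpr ⟨hpaP, by constructor <;> rw [hpa] <;> linarith⟩
    have hpb₁ : pb ∈ P₁ := (hmem₁ pb).mpr ⟨hpbP, by constructor <;> rw [hpb] <;> linarith⟩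
    -- strict bound for non-special pairs in P₁
    have hlt₁ : ∀ p ∈ P₁, ∀ q ∈ P₁, (p, q) ≠ (pb, pa) → oproj θ p - oproj θ q < c := by
      intro p hp q hq hne
      obtain ⟨hpP, hp1, hp2⟩ := (hmem₁ p).mp hp
      obtain ⟨hqP, hq1, hq2⟩ := (hmem₁ q).mp hq
      rcases lt_or_eq_of_le hp2 with h | h
      · linarith
      rcases lt_or_eq_of_le hq1 with h' | h'
      · linarith
      exfalso
      exact hne (by rw [uniqb p hpP pb hpbP h hpb, uniqa q hqP pa hpaP h'.symm hpa])
    have hlt₂ : ∀ p ∈ P₂, ∀ q ∈ P₂, oproj (θ + β) p - oproj (θ + β) q < c := by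
      intro p hp q hq
      obtain ⟨_, hp1, hp2⟩ := hmem₂ p hp
      obtain ⟨_, hq1, hq2⟩ := hmem₂ q hq
      linarith
    -- the Finset of candidate rotation bounds
    set f₁ : (ℝ × ℝ) × (ℝ × ℝ) → ℝ := fun pq => (c - (oproj θ pq.1 - oproj θ pq.2)) /
      (|oproj θ pq.1 - oproj θ pq.2| + |otang θ pq.1 - otang θ pq.2| + 1) with hf₁
    set f₂ : (ℝ × ℝ) × (ℝ × ℝ) → ℝ := fun pq => (c - (oproj (θ + β) pq.1 - oproj (θ + β) pq.2)) /
      (|oproj (θ + β) pq.1 - oproj (θ + β) pq.2| + |otang (θ + β) pq.1 - otang (θ + β) pq.2| + 1)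
      with hf₂
    set T : Finset ℝ := insert (1/2 : ℝ)
      ((((P₁ ×ˢ P₁).filter (fun pq => pq ≠ (pb, pa))).image f₁) ∪
        ((P₂ ×ˢ P₂).image f₂)) with hT
    have hTne : T.Nonempty := ⟨1/2, Finset.mem_insert_self _ _⟩
    set δ : ℝ := T.min' hTne with hδ
    have hδhalf : δ ≤ 1/2 := Finset.min'_le _ _ (Finset.mem_insert_self _ _)
    have hδpos : 0 < δ := by
      have hmem := T.min'_mem hTne
      rw [← hδ] at hmem
      rw [hT] at hmem
      rcases Finset.mem_insert.mp hmem with h | h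
      · rw [h]; norm_num
      rcases Finset.mem_union.mp h with h | h
      · obtain ⟨pq, hpq, heq⟩ := Finset.mem_image.mp h
        obtain ⟨hpq', hne⟩ := Finset.mem_filter.mp hpq
        obtain ⟨hp, hq⟩ := Finset.mem_product.mp hpq'
        rw [← heq]
        have := hlt₁ pq.1 hp pq.2 hq (by simpa using hne)
        apply div_pos (by linarith) (by positivity)
      · obtain ⟨pq, hpq, heq⟩ := Finset.mem_image.mp h
        obtain ⟨hp, hq⟩ := Finset.mem_product.mp hpq
        rw [← heq]
        have := hlt₂ pq.1 hp pq.2 hq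
        apply div_pos (by linarith) (by positivity)
    set D : ℝ := otang θ pb - otang θ pa with hD
    set ε : ℝ := if 0 ≤ D then δ else -δ with hε
    have hεabs : |ε| = δ := by
      rw [hε]; split <;> simp [abs_of_pos hδpos, abs_of_neg (neg_neg_iff_pos.mpr hδpos)]
    have hε2 : |ε| ≤ 2 := by rw [hεabs]; linarith
    set θ' : ℝ := θ + ε with hθ'
    -- bounds for the perturbed strips
    have hbound₁ : ∀ p ∈ P₁, ∀ q ∈ P₁, oproj θ' p - oproj θ' q < c := by
      intro p hp q hq
      by_cases hsp : (p, q) = (pb, pa)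
      · rw [Prod.mk.injEq] at hsp
        obtain ⟨rfl, rfl⟩ := hsp
        have hkey : oproj θ' p - oproj θ' q = Real.cos ε * c - Real.sin ε * D := by
          rw [hθ', oproj_shift, oproj_shift, hD, hpa, hpb, hc]; ring
        have hsinD : 0 ≤ Real.sin ε * D := by
          have hsδ : 0 ≤ Real.sin δ := Real.sin_nonneg_of_nonneg_of_le_pi hδpos.le
            (by linarith [Real.pi_gt_three])
          rw [hε]; split
          · next h => exact mul_nonneg hsδ h
          · next h => rw [Real.sin_neg]; nlinarith
        have hcosε : Real.cos ε = Real.cos δ := by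
          rw [hε]; split <;> simp [Real.cos_neg]
        have hcoslt : Real.cos δ < 1 := by
          have := Real.cos_lt_cos_of_nonneg_of_le_pi (le_refl 0) (by linarith [Real.pi_gt_three]) hδpos
          simpa using this
        rw [hkey, hcosε]
        nlinarith
      · have hflem : f₁ (p, q) ∈ T := by
          rw [hT]
          apply Finset.mem_insert_of_mem
          apply Finset.mem_union_left
          exact Finset.mem_image.mpr ⟨(p, q), Finset.mem_filter.mpr
            ⟨Finset.mem_product.mpr ⟨hp, hq⟩, by simpa using hsp⟩, rfl⟩
        have hδle : δ ≤ f₁ (p, q) := Finset.min'_le _ _ hflem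
        rw [hθ']
        exact pair_bound θ c p q (hlt₁ p hp q hq hsp) ε hε2 (by rw [hεabs]; exact hδle)
    have hbound₂ : ∀ p ∈ P₂, ∀ q ∈ P₂, oproj (θ' + β) p - oproj (θ' + β) q < c := by
      intro p hp q hq
      have hflem : f₂ (p, q) ∈ T := by
        rw [hT]
        apply Finset.mem_insert_of_mem
        apply Finset.mem_union_right
        exact Finset.mem_image.mpr ⟨(p, q), Finset.mem_product.mpr ⟨hp, hq⟩, rfl⟩
      have hδle : δ ≤ f₂ (p, q) := Finset.min'_le _ _ hflem
      have hang : θ' + β = (θ + β) + ε := by rw [hθ']; ring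
      rw [hang]
      exact pair_bound (θ + β) c p q (hlt₂ p hp q hq) ε hε2 (by rw [hεabs]; exact hδle)
    -- build the improved cover
    have hP₁ne : P₁.Nonempty := ⟨pa, hpa₁⟩
    set A₁ : ℝ := P₁.inf' hP₁ne (oproj θ') with hA₁
    set B₁ : ℝ := P₁.sup' hP₁ne (oproj θ') with hB₁
    obtain ⟨pmax, hpmax, hBeq⟩ := P₁.exists_mem_eq_sup' hP₁ne (oproj θ')
    obtain ⟨pmin, hpmin, hAeq⟩ := P₁.exists_mem_eq_inf' hP₁ne (oproj θ')
    have hw₁ : B₁ - A₁ < c := by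
      rw [hB₁, hA₁, hBeq, hAeq]; exact hbound₁ pmax hpmax pmin hpmin
    have hw₁nonneg : 0 ≤ B₁ - A₁ := by
      have h1 : A₁ ≤ oproj θ' pa := Finset.inf'_le _ hpa₁
      have h2 : oproj θ' pa ≤ B₁ := Finset.le_sup' _ hpa₁
      linarith
    by_cases hP₂ne : P₂.Nonempty
    · set A₂ : ℝ := P₂.inf' hP₂ne (oproj (θ' + β)) with hA₂
      set B₂ : ℝ := P₂.sup' hP₂ne (oproj (θ' + β)) with hB₂
      obtain ⟨qmax, hqmax, hBeq₂⟩ := P₂.exists_mem_eq_sup' hP₂ne (oproj (θ' + β))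
      obtain ⟨qmin, hqmin, hAeq₂⟩ := P₂.exists_mem_eq_inf' hP₂ne (oproj (θ' + β))
      have hw₂ : B₂ - A₂ < c := by
        rw [hB₂, hA₂, hBeq₂, hAeq₂]; exact hbound₂ qmax hqmax qmin hqmin
      have hcov : TwoStripCover β (max (B₁ - A₁) (B₂ - A₂)) P := by
        refine ⟨θ', A₁, B₁, A₂, B₂, le_max_left _ _, le_max_right _ _, ?_⟩
        intro q hq
        by_cases hq₁ : q ∈ P₁
        · exact Or.inl ⟨Finset.inf'_le _ hq₁, Finset.le_sup' _ hq₁⟩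
        · have hq₂ : q ∈ P₂ := by
            rw [hP₂, Finset.mem_sdiff]; exact ⟨(hmemPf q).mpr hq, hq₁⟩
          exact Or.inr ⟨Finset.inf'_le _ hq₂, Finset.le_sup' _ hq₂⟩
      have h1 := hopt _ hcov
      have h2 := max_lt hw₁ hw₂
      exact absurd h1 (not_le.mpr h2)
    · have hcov : TwoStripCover β (B₁ - A₁) P := by
        refine ⟨θ', A₁, B₁, 0, 0, le_refl _, by linarith, ?_⟩
        intro q hq
        by_cases hq₁ : q ∈ P₁
        · exact Or.inl ⟨Finset.inf'_le _ hq₁, Finset.le_sup' _ hq₁⟩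
        · exfalso
          exact hP₂ne ⟨q, by rw [hP₂, Finset.mem_sdiff]; exact ⟨(hmemPf q).mpr hq, hq₁⟩⟩
      have h1 := hopt _ hcov
      linarith
end
end

section
/- Let P be finite and p₁,…,pₙ sorted by y-coordinate; fix w and let X be the set of pairs (i,j), 0 ≤ i ≤ j ≤ n, such that there is a horizontal strip σ₀ of width w with {p₁,…,p_i} strictly below σ₀ and {p_{j+1},…,pₙ} strictly above σ₀ and the remaining points inside σ₀. If w₀ < w < w₁ where w₀, w₁ are consecutive values among the pairwise y-coordinate differences of P with w₀ < w* ≤ w₁ (w* the optimal constrained two-strip width), then for every (i,j) ∈ X we have width of the smallest horizontal strip containing {p_{i+1},…,p_j} at most w₀, and consequently w* = min{w₁, min_{(i,j)∈X} width(P_i ∪ \overline{P}_j)}. -/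
open Set

noncomputable section

/-- `P` can be covered by a horizontal strip of width `w` together with a strip of width
at most `w` in some orientation. -/
def HCover (w : ℝ) (P : Set (ℝ × ℝ)) : Prop :=
  ∃ c θ a b : ℝ, b - a ≤ w ∧
    ∀ q ∈ P, (c ≤ q.2 ∧ q.2 ≤ c + w) ∨ (a ≤ oproj θ q ∧ oproj θ q ≤ b)

/-- The points `p (i+1), …, p j`. -/
def MidSet (p : ℕ → ℝ × ℝ) (i j : ℕ) : Set (ℝ × ℝ) :=
  {q | ∃ k, i < k ∧ k ≤ j ∧ q = p k}

/-- The points `p 1, …, p i`. -/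
def PiSet (p : ℕ → ℝ × ℝ) (i : ℕ) : Set (ℝ × ℝ) :=
  {q | ∃ k, 1 ≤ k ∧ k ≤ i ∧ q = p k}

/-- The points `p (j+1), …, p n`. -/
def PbarSet (p : ℕ → ℝ × ℝ) (n j : ℕ) : Set (ℝ × ℝ) :=
  {q | ∃ k, j < k ∧ k ≤ n ∧ q = p k}

/-- The pairs `(i,j)` realizable by a horizontal strip of width `w` with
`p 1, …, p i` strictly below it, `p (j+1), …, p n` strictly above it, and the rest inside. -/
def Xpairs (p : ℕ → ℝ × ℝ) (n : ℕ) (w : ℝ) : Set (ℕ × ℕ) :=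
  {ij | ij.1 ≤ ij.2 ∧ ij.2 ≤ n ∧ ∃ c : ℝ,
    (∀ k, 1 ≤ k → k ≤ ij.1 → (p k).2 < c) ∧
    (∀ k, ij.2 < k → k ≤ n → c + w < (p k).2) ∧
    (∀ k, ij.1 < k → k ≤ ij.2 → c ≤ (p k).2 ∧ (p k).2 ≤ c + w)}

/-- The pairwise differences of `y`-coordinates of `p 1, …, p n`. -/
def Wdiffs (p : ℕ → ℝ × ℝ) (n : ℕ) : Set ℝ :=
  {d | ∃ k l, 1 ≤ k ∧ k ≤ n ∧ 1 ≤ l ∧ l ≤ n ∧ d = |(p k).2 - (p l).2|}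

lemma oproj_zero (q : ℝ × ℝ) : oproj 0 q = q.2 := by
  simp [oproj]

lemma piSet_finite (p : ℕ → ℝ × ℝ) (i : ℕ) : (PiSet p i).Finite := by
  apply ((Set.finite_Icc 1 i).image p).subset
  rintro q ⟨k, h1, h2, rfl⟩; exact ⟨k, ⟨h1, h2⟩, rfl⟩

lemma pbarSet_finite (p : ℕ → ℝ × ℝ) (n j : ℕ) : (PbarSet p n j).Finite := by
  apply ((Set.finite_Icc (j+1) n).image p).subset
  rintro q ⟨k, h1, h2, rfl⟩; exact ⟨k, ⟨h1, h2⟩, rfl⟩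

lemma midSet_finite (p : ℕ → ℝ × ℝ) (i j : ℕ) : (MidSet p i j).Finite := by
  apply ((Set.finite_Icc (i+1) j).image p).subset
  rintro q ⟨k, h1, h2, rfl⟩; exact ⟨k, ⟨h1, h2⟩, rfl⟩

lemma widthAt_nonneg (θ : ℝ) {S : Set (ℝ × ℝ)} (hS : S.Finite) : 0 ≤ widthAt θ S := by
  rcases S.eq_empty_or_nonempty with h | h
  · simp [widthAt, h, Real.sSup_empty, Real.sInf_empty]
  · have hne : (oproj θ '' S).Nonempty := h.image _
    have hfin := hS.image (oproj θ)
    have h2 := csInf_le_csSup hne hfin.bddBelow hfin.bddAbove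
    unfold widthAt; linarith

lemma oproj_add_pi (θ : ℝ) (q : ℝ × ℝ) : oproj (θ + Real.pi) q = -oproj θ q := by
  simp [oproj, Real.sin_add_pi, Real.cos_add_pi]; ring

lemma widthAt_add_pi (θ : ℝ) (S : Set (ℝ × ℝ)) : widthAt (θ + Real.pi) S = widthAt θ S := by
  have himg : oproj (θ + Real.pi) '' S = -(oproj θ '' S) := by
    ext x
    constructor
    · rintro ⟨q, hq, rfl⟩
      rw [Set.mem_neg]
      exact ⟨q, hq, by rw [oproj_add_pi]; ring⟩
    · intro hx
      rw [Set.mem_neg] at hx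
      rcases hx with ⟨q, hq, hq'⟩
      exact ⟨q, hq, by rw [oproj_add_pi, hq']; ring⟩
  have hsup : ∀ A : Set ℝ, sSup (-A) = -sInf A := by
    intro A; rw [Real.sInf_def, neg_neg]
  have hinf : ∀ A : Set ℝ, sInf (-A) = -sSup A := by
    intro A; rw [Real.sInf_def, neg_neg]
  rw [widthAt, widthAt, himg, hsup, hinf]; ring

lemma widthAt_sub_pi (θ : ℝ) (S : Set (ℝ × ℝ)) : widthAt (θ - Real.pi) S = widthAt θ S := by
  have := widthAt_add_pi (θ - Real.pi) S
  rw [sub_add_cancel] at this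
  exact this.symm

lemma widthAt_add_int_mul_pi (S : Set (ℝ × ℝ)) (θ : ℝ) (k : ℤ) :
    widthAt (θ + k * Real.pi) S = widthAt θ S := by
  induction k using Int.induction_on with
  | zero => simp
  | succ m ih =>
    have h : θ + ((m : ℤ) + 1 : ℤ) * Real.pi = (θ + (m : ℤ) * Real.pi) + Real.pi := by
      push_cast; ring
    rw [h, widthAt_add_pi, ih]
  | pred m ih =>
    have h : θ + (-(m : ℤ) - 1 : ℤ) * Real.pi = (θ + (-(m : ℤ) : ℤ) * Real.pi) - Real.pi := by
      push_cast; ring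
    rw [h, widthAt_sub_pi, ih]

lemma widthSet_le_widthAt {S : Set (ℝ × ℝ)} (hS : S.Finite) (θ : ℝ) :
    widthSet S ≤ widthAt θ S := by
  have hπ := Real.pi_pos
  set k : ℤ := ⌊θ / Real.pi⌋ with hk
  set θ' := θ - k * Real.pi with hθ'
  have hmem : θ' ∈ Set.Ico 0 Real.pi := by
    constructor
    · have h1 : (k : ℝ) * Real.pi ≤ θ := (le_div_iff₀ hπ).mp (Int.floor_le (θ / Real.pi))
      simp only [hθ']; linarith
    · have h2 : θ < ((k : ℝ) + 1) * Real.pi := (div_lt_iff₀ hπ).mp (Int.lt_floor_add_one (θ / Real.pi))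
      simp only [hθ']; linarith
  have hbdd : BddBelow ((fun φ => widthAt φ S) '' Set.Ico 0 Real.pi) :=
    ⟨0, by rintro x ⟨φ, _, rfl⟩; exact widthAt_nonneg φ hS⟩
  calc widthSet S ≤ widthAt θ' S := csInf_le hbdd ⟨θ', hmem, rfl⟩
    _ = widthAt (θ' + k * Real.pi) S := (widthAt_add_int_mul_pi S θ' k).symm
    _ = widthAt θ S := by rw [hθ']; ring_nf

lemma widthSet_nonneg {S : Set (ℝ × ℝ)} (hS : S.Finite) : 0 ≤ widthSet S := by
  have hne : ((fun θ => widthAt θ S) '' Set.Ico 0 Real.pi).Nonempty :=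
    ⟨widthAt 0 S, 0, ⟨le_refl 0, Real.pi_pos⟩, rfl⟩
  refine le_csInf hne ?_
  rintro x ⟨φ, _, rfl⟩; exact widthAt_nonneg φ hS

lemma exists_threshold (Q : ℕ → Prop) :
    ∀ n : ℕ, (∀ k l, 1 ≤ k → k ≤ l → l ≤ n → Q l → Q k) →
    ∃ i, i ≤ n ∧ ∀ k, 1 ≤ k → k ≤ n → (Q k ↔ k ≤ i) := by
  intro n
  induction n with
  | zero => exact fun _ => ⟨0, le_rfl, fun k hk hk' => by omega⟩
  | succ m ih =>
    intro H
    by_cases hQ : Q (m + 1)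
    · exact ⟨m + 1, le_rfl, fun k hk hk' =>
        ⟨fun _ => hk', fun _ => H k (m + 1) hk hk' le_rfl hQ⟩⟩
    · obtain ⟨i, hi, hiff⟩ := ih fun k l hk hkl hl hQl => H k l hk hkl (hl.trans (Nat.le_succ m)) hQl
      refine ⟨i, hi.trans (Nat.le_succ m), fun k hk hk' => ?_⟩
      rcases Nat.lt_or_ge k (m + 1) with h | h
      · exact hiff k hk (by omega)
      · have hkm : k = m + 1 := by omega
        subst hkm
        exact ⟨fun h' => (hQ h').elim, fun h' => absurd h' (by omega)⟩
/-- if `w₀ < w < w₁` for consecutive values `w₀ < w₁` of the pairwise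
`y`-differences with `w₀ < w* ≤ w₁`, then every pair `(i,j) ∈ X` has its middle points in a
horizontal strip of width at most `w₀`, and
`w* = min (w₁, min_{(i,j)∈X} width (P_i ∪ P̄_j))`. -/
theorem stmt16 (n : ℕ) (hn : 1 ≤ n) (p : ℕ → ℝ × ℝ)
    (hsort : ∀ k l, 1 ≤ k → k ≤ l → l ≤ n → (p k).2 ≤ (p l).2)
    (wstar w₀ w₁ w : ℝ)
    (hw0 : w₀ ∈ Wdiffs p n) (hw1 : w₁ ∈ Wdiffs p n) (h01 : w₀ < w₁)
    (hcons : ∀ d ∈ Wdiffs p n, d ∉ Set.Ioo w₀ w₁)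
    (hstar_cov : HCover wstar (PiSet p n))
    (hstar_min : ∀ w', HCover w' (PiSet p n) → wstar ≤ w')
    (hgap : w₀ < wstar ∧ wstar ≤ w₁)
    (hw : w₀ < w ∧ w < w₁) :
    (∀ ij ∈ Xpairs p n w, widthAt 0 (MidSet p ij.1 ij.2) ≤ w₀) ∧
    wstar = min w₁
      (sInf {d | ∃ ij ∈ Xpairs p n w, d = widthSet (PiSet p ij.1 ∪ PbarSet p n ij.2)}) := by
  have hw0nonneg : 0 ≤ w₀ := by
    obtain ⟨k, l, _, _, _, _, heq⟩ := hw0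
    rw [heq]; exact abs_nonneg _
  have hle_w0 : ∀ k l, 1 ≤ k → k ≤ n → 1 ≤ l → l ≤ n →
      |(p k).2 - (p l).2| < w₁ → |(p k).2 - (p l).2| ≤ w₀ := by
    intro k l hk hk' hl hl' hlt
    by_contra hcon
    exact hcons _ ⟨k, l, hk, hk', hl, hl', rfl⟩ ⟨lt_of_not_ge hcon, hlt⟩
  have hge_w1 : ∀ k l, 1 ≤ k → k ≤ n → 1 ≤ l → l ≤ n →
      w₀ < |(p k).2 - (p l).2| → w₁ ≤ |(p k).2 - (p l).2| := by
    intro k l hk hk' hl hl' hgt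
    by_contra hcon
    exact hcons _ ⟨k, l, hk, hk', hl, hl', rfl⟩ ⟨hgt, lt_of_not_ge hcon⟩
  -- Part A
  have partA : ∀ ij ∈ Xpairs p n w, widthAt 0 (MidSet p ij.1 ij.2) ≤ w₀ := by
    rintro ⟨i, j⟩ ⟨hij, hjn, c, hbelow, habove, hmid⟩
    simp only at hij hjn hbelow habove hmid ⊢
    rcases Nat.eq_or_lt_of_le hij with heq | hlt
    · have hempty : MidSet p i j = ∅ := by
        ext q; simp only [MidSet, Set.mem_setOf_eq, Set.mem_empty_iff_false, iff_false]
        rintro ⟨k, h1, h2, rfl⟩; omega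
      rw [hempty]
      have : widthAt 0 (∅ : Set (ℝ × ℝ)) = 0 := by
        simp [widthAt, Real.sSup_empty, Real.sInf_empty]
      rw [this]; exact hw0nonneg
    · have hfin : (MidSet p i j).Finite := midSet_finite p i j
      have hne : (MidSet p i j).Nonempty := ⟨p j, j, hlt, le_rfl, rfl⟩
      have hfin' := hfin.image (oproj 0)
      have hne' := hne.image (oproj 0)
      obtain ⟨qM, hqMmem, hMeq⟩ := hne'.csSup_mem hfin'
      obtain ⟨qm, hqmmem, hmeq⟩ := hne'.csInf_mem hfin'
      obtain ⟨k, hik, hkj, rfl⟩ := hqMmem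
      obtain ⟨l, hil, hlj, rfl⟩ := hqmmem
      have hyk := hmid k hik hkj
      have hyl := hmid l hil hlj
      have habs : |(p k).2 - (p l).2| < w₁ := by
        rw [abs_lt]; constructor <;> [linarith [hw.1, hw.2]; linarith [hw.2]]
      have hle := hle_w0 k l (by omega) (by omega) (by omega) (by omega) habs
      have : widthAt 0 (MidSet p i j) = (p k).2 - (p l).2 := by
        rw [widthAt, ← hMeq, ← hmeq, oproj_zero, oproj_zero]
      rw [this]
      calc (p k).2 - (p l).2 ≤ |(p k).2 - (p l).2| := le_abs_self _
        _ ≤ w₀ := hle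
  refine ⟨partA, ?_⟩
  set D := {d | ∃ ij ∈ Xpairs p n w, d = widthSet (PiSet p ij.1 ∪ PbarSet p n ij.2)} with hD
  have hD_ne : D.Nonempty := by
    refine ⟨widthSet (PiSet p 0 ∪ PbarSet p n 0), ⟨(0, 0), ?_, rfl⟩⟩
    refine ⟨le_rfl, Nat.zero_le n, (p 1).2 - w - 1, fun k hk hk' => by omega, ?_,
      fun k hk hk' => by omega⟩
    intro k hk hk'
    have := hsort 1 k le_rfl (by omega) hk'
    linarith
  have hbddD : BddBelow D := by
    refine ⟨0, ?_⟩
    rintro x ⟨⟨i', j'⟩, _, rfl⟩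
    exact widthSet_nonneg ((piSet_finite p i').union (pbarSet_finite p n j'))
  -- wstar ≤ every element of D
  have hwstar_le : ∀ d ∈ D, wstar ≤ d := by
    rintro d ⟨⟨i, j⟩, ⟨hij, hjn, c, hbelow, habove, hmid⟩, rfl⟩
    simp only at hij hjn hbelow habove hmid ⊢
    have hfin : (PiSet p i ∪ PbarSet p n j).Finite :=
      (piSet_finite p i).union (pbarSet_finite p n j)
    set S := PiSet p i ∪ PbarSet p n j with hS
    have key : ∀ ε > 0, wstar ≤ max w₀ (widthSet S + ε) := by
      intro ε hε
      have himg_ne : ((fun θ => widthAt θ S) '' Set.Ico 0 Real.pi).Nonempty :=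
        ⟨widthAt 0 S, 0, ⟨le_refl 0, Real.pi_pos⟩, rfl⟩
      have himg_bdd : BddBelow ((fun θ => widthAt θ S) '' Set.Ico 0 Real.pi) :=
        ⟨0, by rintro x ⟨φ, _, rfl⟩; exact widthAt_nonneg φ hfin⟩
      have hlt : sInf ((fun θ => widthAt θ S) '' Set.Ico 0 Real.pi) < widthSet S + ε := by
        have : widthSet S < widthSet S + ε := by linarith
        exact this
      obtain ⟨x, ⟨θ₀, hθ₀, rfl⟩, hx⟩ := (csInf_lt_iff himg_bdd himg_ne).mp hlt
      apply hstar_min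
      classical
      refine ⟨if i < j then (p (i + 1)).2 else 0, θ₀,
        sInf (oproj θ₀ '' S), sSup (oproj θ₀ '' S), ?_, ?_⟩
      · have : widthAt θ₀ S ≤ widthSet S + ε := le_of_lt hx
        have h2 : widthSet S + ε ≤ max w₀ (widthSet S + ε) := le_max_right _ _
        show sSup (oproj θ₀ '' S) - sInf (oproj θ₀ '' S) ≤ _
        calc sSup (oproj θ₀ '' S) - sInf (oproj θ₀ '' S) = widthAt θ₀ S := rfl
          _ ≤ max w₀ (widthSet S + ε) := le_trans this h2
      · rintro q ⟨k, hk1, hkn, rfl⟩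
        rcases Nat.lt_or_ge i k with hik | hik
        · rcases le_or_gt k j with hkj | hkj
          · left
            have hc' : (if i < j then (p (i + 1)).2 else 0) = (p (i + 1)).2 :=
              if_pos (by omega)
            have hmidk := hmid k hik hkj
            have hi1 := hmid (i + 1) (Nat.lt_succ_self i) (by omega)
            rw [hc']
            constructor
            · exact hsort (i + 1) k (by omega) hik hkn
            · have habs : |(p k).2 - (p (i + 1)).2| < w₁ := by
                rw [abs_lt]
                constructor <;> [linarith [hw.1, hw.2]; linarith [hw.2]]
              have hle := hle_w0 k (i + 1) (by omega) hkn (by omega) (by omega) habs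
              have h3 : (p k).2 - (p (i + 1)).2 ≤ w₀ := le_trans (le_abs_self _) hle
              have h4 : w₀ ≤ max w₀ (widthSet S + ε) := le_max_left _ _
              linarith
          · right
            have hmemS : p k ∈ S := Or.inr ⟨k, hkj, hkn, rfl⟩
            have hmem' : oproj θ₀ (p k) ∈ oproj θ₀ '' S := ⟨_, hmemS, rfl⟩
            exact ⟨csInf_le (hfin.image _).bddBelow hmem',
              le_csSup (hfin.image _).bddAbove hmem'⟩
        · right
          have hmemS : p k ∈ S := Or.inl ⟨k, hk1, hik, rfl⟩
          have hmem' : oproj θ₀ (p k) ∈ oproj θ₀ '' S := ⟨_, hmemS, rfl⟩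
          exact ⟨csInf_le (hfin.image _).bddBelow hmem',
            le_csSup (hfin.image _).bddAbove hmem'⟩
    by_contra hcon
    push_neg at hcon
    have hε : (0:ℝ) < (wstar - widthSet S) / 2 := by linarith
    have hk := key _ hε
    have h1 : max w₀ (widthSet S + (wstar - widthSet S) / 2) < wstar :=
      max_lt hgap.1 (by linarith)
    exact absurd hk (not_le.mpr h1)
  -- min ≤ wstar
  have hmin_le : min w₁ (sInf D) ≤ wstar := by
    rcases le_or_gt w₁ wstar with h | h
    · exact le_trans (min_le_left _ _) h
    · obtain ⟨c, θ, a, b, hba, hcov⟩ := hstar_cov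
      obtain ⟨i, hin, hi⟩ := exists_threshold (fun k => (p k).2 < c) n
        (fun k l hk hkl hl hQ => lt_of_le_of_lt (hsort k l hk hkl hl) hQ)
      obtain ⟨j, hjn, hj⟩ := exists_threshold (fun k => (p k).2 ≤ c + wstar) n
        (fun k l hk hkl hl hQ => le_trans (hsort k l hk hkl hl) hQ)
      have hwstar_pos : 0 < wstar := lt_of_le_of_lt hw0nonneg hgap.1
      have hij : i ≤ j := by
        rcases Nat.eq_zero_or_pos i with rfl | hi0
        · exact Nat.zero_le j
        · have hQi : (p i).2 < c := (hi i hi0 hin).mpr le_rfl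
          exact (hj i hi0 hin).mp (by linarith)
      have Fbelow : ∀ k, 1 ≤ k → k ≤ i → (p k).2 < c :=
        fun k hk hk' => (hi k hk (le_trans hk' hin)).mpr hk'
      have Fabove : ∀ k, j < k → k ≤ n → c + wstar < (p k).2 := by
        intro k hk hk'
        by_contra hle
        push_neg at hle
        exact absurd ((hj k (by omega) hk').mp hle) (by omega)
      have Fmid : ∀ k, i < k → k ≤ j → c ≤ (p k).2 ∧ (p k).2 ≤ c + wstar := by
        intro k hk hk'
        have hk1 : 1 ≤ k := by omega
        have hkn : k ≤ n := le_trans hk' hjn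
        constructor
        · by_contra hlt
          push_neg at hlt
          exact absurd ((hi k hk1 hkn).mp hlt) (by omega)
        · exact (hj k hk1 hkn).mpr hk'
      have hF5 : 1 ≤ i → j < n → w₁ ≤ (p (j + 1)).2 - (p i).2 := by
        intro hi0 hjln
        have h1 : (p i).2 < c := Fbelow i hi0 le_rfl
        have h2 : c + wstar < (p (j + 1)).2 := Fabove (j + 1) (Nat.lt_succ_self j) (by omega)
        have hd : (0:ℝ) ≤ (p (j + 1)).2 - (p i).2 := by linarith
        have hgt : w₀ < |(p (j + 1)).2 - (p i).2| := by
          rw [abs_of_nonneg hd]; linarith [hgap.1]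
        have := hge_w1 (j + 1) i (by omega) (by omega) hi0 hin hgt
        rwa [abs_of_nonneg hd] at this
      have hXmem : (i, j) ∈ Xpairs p n w := by
        refine ⟨hij, hjn, ?_⟩
        rcases Nat.eq_or_lt_of_le hij with heqij | hltij
        · subst heqij
          rcases Nat.eq_zero_or_pos i with rfl | hi0
          · refine ⟨(p 1).2 - w - 1, fun k hk hk' => by omega, ?_, fun k hk hk' => by omega⟩
            intro k hk hk'
            have := hsort 1 k le_rfl (by omega) hk'
            linarith
          · rcases Nat.lt_or_ge i n with hiln | hige
            · have h5 := hF5 hi0 hiln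
              refine ⟨((p i).2 + ((p (i + 1)).2 - w)) / 2, ?_, ?_, fun k hk hk' => by omega⟩
              · intro k hk hk'
                have hs := hsort k i hk hk' hin
                have : (p i).2 < (p (i + 1)).2 - w := by linarith [hw.2]
                linarith
              · intro k hk hk'
                have hs := hsort (i + 1) k (by omega) hk hk'
                have : (p i).2 < (p (i + 1)).2 - w := by linarith [hw.2]
                linarith
            · have hieqn : i = n := le_antisymm hin hige
              refine ⟨(p i).2 + 1, ?_, fun k hk hk' => by omega, fun k hk hk' => by omega⟩
              intro k hk hk'
              have := hsort k i hk hk' hin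
              linarith
        · -- i < j : middle nonempty
          have hi1n : i + 1 ≤ n := by omega
          have hmid_lo := Fmid (i + 1) (Nat.lt_succ_self i) hltij
          have hmid_hi := Fmid j hltij le_rfl
          have hMm : (p j).2 - (p (i + 1)).2 ≤ w₀ := by
            have habs : |(p j).2 - (p (i + 1)).2| < w₁ := by
              rw [abs_lt]; constructor <;> linarith [h]
            have := hle_w0 j (i + 1) (by omega) hjn (by omega) hi1n habs
            exact le_trans (le_abs_self _) this
          classical
          set yL : ℝ := if 1 ≤ i then (p i).2 else (p j).2 - w with hyL
          set yU : ℝ := if j < n then (p (j + 1)).2 - w else (p (i + 1)).2 with hyU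
          set L : ℝ := max ((p j).2 - w) yL with hLdef
          set U : ℝ := min ((p (i + 1)).2) yU with hUdef
          have hMltm : (p j).2 - w < (p (i + 1)).2 := by linarith [hw.1]
          have hMjlt : (p j).2 < (p (j + 1)).2 → (p j).2 - w < (p (j + 1)).2 - w := by
            intro hh; linarith
          have hLU : L < U := by
            rw [hLdef, hUdef, max_lt_iff, lt_min_iff, lt_min_iff]
            have hylm : yL < (p (i + 1)).2 := by
              rw [hyL]
              split_ifs with h1
              · have := Fbelow i h1 le_rfl
                linarith [hmid_lo.1]
              · exact hMltm
            have hMU : (p j).2 - w < yU := by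
              rw [hyU]
              split_ifs with h2
              · have := Fabove (j + 1) (Nat.lt_succ_self j) (by omega)
                have := hmid_hi.2
                linarith
              · exact hMltm
            have hyLU : yL < yU := by
              by_cases h1 : 1 ≤ i
              · by_cases h2 : j < n
                · rw [hyL, hyU, if_pos h1, if_pos h2]
                  have := hF5 h1 h2
                  linarith [hw.2]
                · rw [hyU, if_neg h2]
                  exact hylm
              · by_cases h2 : j < n
                · rw [hyL, hyU, if_neg h1, if_pos h2]
                  have h4 := Fabove (j + 1) (Nat.lt_succ_self j) (by omega)
                  linarith [hmid_hi.2]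
                · rw [hyL, hyU, if_neg h1, if_neg h2]
                  exact hMltm
            exact ⟨⟨hMltm, hMU⟩, ⟨hylm, hyLU⟩⟩
          refine ⟨(L + U) / 2, ?_, ?_, ?_⟩
          · intro k hk hk'
            have hi0 : 1 ≤ i := le_trans hk hk'
            have hs := hsort k i hk hk' hin
            have hyLi : yL = (p i).2 := if_pos hi0
            have : (p i).2 ≤ L := by rw [hLdef, ← hyLi]; exact le_max_right _ _
            linarith
          · intro k hk hk'
            have hjln : j < n := lt_of_lt_of_le hk hk'
            have hs := hsort (j + 1) k (by omega) hk hk'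
            have hyUj : yU = (p (j + 1)).2 - w := if_pos hjln
            have : U ≤ (p (j + 1)).2 - w := by rw [hUdef, ← hyUj]; exact min_le_right _ _
            linarith
          · intro k hk hk'
            have hs1 := hsort (i + 1) k (by omega) hk (le_trans hk' hjn)
            have hs2 := hsort k j (by omega) hk' hjn
            have hU1 : U ≤ (p (i + 1)).2 := min_le_left _ _
            have hL1 : (p j).2 - w ≤ L := le_max_left _ _
            constructor
            · linarith
            · linarith
      -- widthSet ≤ wstar for this pair
      have hproj : ∀ q ∈ PiSet p i ∪ PbarSet p n j, a ≤ oproj θ q ∧ oproj θ q ≤ b := by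
        rintro q (⟨k, hk1, hki, rfl⟩ | ⟨k, hkj, hkn, rfl⟩)
        · have hy := Fbelow k hk1 hki
          have hmem : p k ∈ PiSet p n := ⟨k, hk1, le_trans hki hin, rfl⟩
          rcases hcov _ hmem with h' | h'
          · exact absurd h'.1 (by linarith)
          · exact h'
        · have hy := Fabove k hkj hkn
          have hmem : p k ∈ PiSet p n := ⟨k, by omega, hkn, rfl⟩
          rcases hcov _ hmem with h' | h'
          · exact absurd h'.2 (by linarith)
          · exact h'
      have hfin : (PiSet p i ∪ PbarSet p n j).Finite :=
        (piSet_finite p i).union (pbarSet_finite p n j)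
      have hwS : widthSet (PiSet p i ∪ PbarSet p n j) ≤ wstar := by
        rcases (PiSet p i ∪ PbarSet p n j).eq_empty_or_nonempty with hSe | hSne
        · rw [hSe]
          have hwz : ∀ φ : ℝ, widthAt φ (∅ : Set (ℝ × ℝ)) = 0 := by
            intro φ; simp [widthAt, Real.sSup_empty, Real.sInf_empty]
          have : widthSet (∅ : Set (ℝ × ℝ)) ≤ widthAt 0 (∅ : Set (ℝ × ℝ)) :=
            widthSet_le_widthAt (Set.finite_empty) 0
          rw [hwz 0] at this
          linarith
        · have hne' := hSne.image (oproj θ)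
          have h1 : sSup (oproj θ '' (PiSet p i ∪ PbarSet p n j)) ≤ b :=
            csSup_le hne' (by rintro x ⟨q, hq, rfl⟩; exact (hproj q hq).2)
          have h2 : a ≤ sInf (oproj θ '' (PiSet p i ∪ PbarSet p n j)) :=
            le_csInf hne' (by rintro x ⟨q, hq, rfl⟩; exact (hproj q hq).1)
          have h3 : widthAt θ (PiSet p i ∪ PbarSet p n j) ≤ b - a := by
            unfold widthAt; linarith
          exact le_trans (widthSet_le_widthAt hfin θ) (le_trans h3 hba)
      have hmemD : widthSet (PiSet p i ∪ PbarSet p n j) ∈ D := ⟨(i, j), hXmem, rfl⟩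
      exact le_trans (min_le_right _ _) (le_trans (csInf_le hbddD hmemD) hwS)
  exact le_antisymm (le_min hgap.2 (le_csInf hD_ne hwstar_le)) hmin_le
end
end
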